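/- If m and n are positive integers divisible by 4, then γ_tR(C_m × C_n) = mn/2, where C_m × C_n is the direct product of cycles. -/

import Mathlib

open Finset

/-- A total Roman dominating function: labels in {0,1,2}, every 0-labeled vertex has a
2-labeled neighbor, and positive-labeled vertices induce a subgraph with no isolated vertex. -/
def IsTRDF {V : Type*} (G : SimpleGraph V) (f : V → ℕ) : Prop :=
  (∀ v, f v ≤ 2) ∧
  (∀ v, f v = 0 → ∃ u, G.Adj v u ∧ f u = 2) ∧
  (∀ v, 0 < f v → ∃ u, G.Adj v u ∧ 0 < f u)

/-- The total Roman domination number. -/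
noncomputable def trdn {V : Type*} (G : SimpleGraph V) [Fintype V] : ℕ :=
  sInf {w | ∃ f : V → ℕ, IsTRDF G f ∧ ∑ v, f v = w}

/-- A total dominating set. -/
def IsTotalDomSet {V : Type*} (G : SimpleGraph V) (D : Set V) : Prop :=
  ∀ v, ∃ u ∈ D, G.Adj v u

/-- The total domination number. -/
noncomputable def tdn {V : Type*} (G : SimpleGraph V) [Fintype V] : ℕ :=
  sInf {n | ∃ D : Finset V, IsTotalDomSet G ↑D ∧ D.card = n}

/-- A packing: pairwise disjoint closed neighborhoods. -/
def IsPacking {V : Type*} (G : SimpleGraph V) (S : Set V) : Prop :=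
  ∀ u ∈ S, ∀ v ∈ S, u ≠ v →
    Disjoint (insert u (G.neighborSet u)) (insert v (G.neighborSet v))

/-- The packing number. -/
noncomputable def packingNumber {V : Type*} (G : SimpleGraph V) [Fintype V] : ℕ :=
  sSup {n | ∃ S : Finset V, IsPacking G ↑S ∧ S.card = n}

/-- An open packing: pairwise disjoint open neighborhoods. -/
def IsOpenPacking {V : Type*} (G : SimpleGraph V) (S : Set V) : Prop :=
  ∀ u ∈ S, ∀ v ∈ S, u ≠ v → Disjoint (G.neighborSet u) (G.neighborSet v)

/-- The open packing number. -/
noncomputable def openPackingNumber {V : Type*} (G : SimpleGraph V) [Fintype V] : ℕ :=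
  sSup {n | ∃ S : Finset V, IsOpenPacking G ↑S ∧ S.card = n}

/-- The direct (tensor) product of two simple graphs. -/
def dirProd {V W : Type*} (G : SimpleGraph V) (H : SimpleGraph W) : SimpleGraph (V × W) where
  Adj p q := G.Adj p.1 q.1 ∧ H.Adj p.2 q.2
  symm := ⟨fun p q h => ⟨h.1.symm, h.2.symm⟩⟩
  loopless := ⟨fun p h => G.loopless.irrefl p.1 h.1⟩

/-- A graph with no isolated vertices. -/
def NoIsolated {V : Type*} (G : SimpleGraph V) : Prop := ∀ v, ∃ u, G.Adj v u

/-!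
Upper bound: the vertices `i ≡ 0, 1 (mod 4)` form a total dominating set of `C_m` of size `m / 2`,
the product of two total dominating sets is total dominating in the direct product, and labelling
a total dominating set with `2` gives a total Roman dominating function of weight `mn / 2`.

Lower bound: in a graph of maximum degree `d ≥ 2`, a vertex labelled `2` has a positive neighbour
and hence at most `d - 1` neighbours labelled `0`; counting the `0`-labelled vertices through
their `2`-labelled neighbours gives `2 |V| ≤ d · w(f)`, and `C_m × C_n` has maximum degree `4`.
-/

open SimpleGraph

section TotalRoman

variable {V : Type*} {G : SimpleGraph V}

lemma trdn_le [Fintype V] {f : V → ℕ} (hf : IsTRDF G f) : trdn G ≤ ∑ v, f v :=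
  Nat.sInf_le ⟨f, hf, rfl⟩

lemma le_trdn [Fintype V] {k : ℕ} (hex : ∃ f, IsTRDF G f)
    (h : ∀ f, IsTRDF G f → k ≤ ∑ v, f v) : k ≤ trdn G := by
  obtain ⟨f, hf⟩ := hex
  exact le_csInf ⟨_, f, hf, rfl⟩ (by rintro _ ⟨g, hg, rfl⟩; exact h g hg)

lemma IsTotalDomSet.isTRDF [DecidableEq V] {D : Finset V} (hD : IsTotalDomSet G D) :
    IsTRDF G (fun v => if v ∈ D then 2 else 0) := by
  have two_nbr : ∀ v, ∃ u, G.Adj v u ∧ (if u ∈ D then 2 else 0) = 2 := fun v => by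
    obtain ⟨u, hu, hvu⟩ := hD v
    exact ⟨u, hvu, if_pos hu⟩
  refine ⟨fun v => by dsimp only; split_ifs <;> omega, fun v _ => two_nbr v, fun v _ => ?_⟩
  obtain ⟨u, hvu, hu⟩ := two_nbr v
  exact ⟨u, hvu, by dsimp only at hu ⊢; omega⟩

lemma trdn_le_two_mul_card [Fintype V] [DecidableEq V] {D : Finset V}
    (hD : IsTotalDomSet G D) : trdn G ≤ 2 * #D := by
  refine (trdn_le hD.isTRDF).trans_eq ?_
  simp [Finset.sum_ite_mem, mul_comm]

lemma IsTRDF.card_zeros_le [Fintype V] [DecidableRel G.Adj] {d : ℕ}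
    (hdeg : ∀ v, G.degree v ≤ d) {f : V → ℕ} (hf : IsTRDF G f) :
    #{v | f v = 0} ≤ (d - 1) * #{v | f v = 2} := by
  classical
  have := Finset.card_mul_le_card_mul (m := 1) (n := d - 1) G.Adj
    (s := {v | f v = 0}) (t := {v | f v = 2}) ?_ ?_
  · simpa [mul_comm] using this
  · intro v hv
    obtain ⟨u, hvu, hu⟩ := hf.2.1 v (Finset.mem_filter.1 hv).2
    exact Finset.one_le_card.2 ⟨u, by simp [Finset.bipartiteAbove, hvu, hu]⟩
  · intro u hu
    obtain ⟨w, huw, hw⟩ := hf.2.2 u (by simp at hu; omega)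
    have hsub : Finset.bipartiteBelow G.Adj {v | f v = 0} u ⊆ (G.neighborFinset u).erase w := by
      intro v hv
      simp only [Finset.bipartiteBelow, Finset.mem_filter, Finset.mem_univ, true_and] at hv
      refine Finset.mem_erase.2 ⟨?_, (G.mem_neighborFinset _ _).2 hv.2.symm⟩
      rintro rfl
      omega
    calc _ ≤ _ := Finset.card_le_card hsub
      _ = G.degree u - 1 := Finset.card_erase_of_mem ((G.mem_neighborFinset _ _).2 huw)
      _ ≤ d - 1 := Nat.sub_le_sub_right (hdeg u) 1

lemma IsTRDF.two_mul_card_le [Fintype V] [DecidableRel G.Adj] {d : ℕ} (hd : 2 ≤ d)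
    (hdeg : ∀ v, G.degree v ≤ d) {f : V → ℕ} (hf : IsTRDF G f) :
    2 * Fintype.card V ≤ d * ∑ v, f v := by
  have hsum : ∑ v, f v = #{v | f v ≠ 0} + #{v | f v = 2} := by
    simp only [Finset.card_filter, ← Finset.sum_add_distrib]
    refine Finset.sum_congr rfl fun v _ => ?_
    have := hf.1 v
    split_ifs <;> omega
  have hcard : #{v | f v = 0} + #{v | f v ≠ 0} = Fintype.card V :=
    Finset.card_filter_add_card_filter_not _
  have htwo : #{v | f v = 2} ≤ #{v | f v ≠ 0} :=
    Finset.card_le_card fun v hv => by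
      simp only [Finset.mem_filter, Finset.mem_univ, true_and] at hv ⊢
      omega
  have hzero := hf.card_zeros_le hdeg
  obtain ⟨e, rfl⟩ : ∃ e, d = e + 2 := ⟨d - 2, by omega⟩
  rw [show e + 2 - 1 = e + 1 by omega] at hzero
  rw [hsum, ← hcard]
  nlinarith

end TotalRoman

section DirProd

variable {V W : Type*} {G : SimpleGraph V} {H : SimpleGraph W}

instance [DecidableRel G.Adj] [DecidableRel H.Adj] : DecidableRel (dirProd G H).Adj :=
  fun p q => inferInstanceAs (Decidable (G.Adj p.1 q.1 ∧ H.Adj p.2 q.2))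

lemma dirProd_degree [Fintype V] [Fintype W] [DecidableRel G.Adj] [DecidableRel H.Adj]
    (p : V × W) : (dirProd G H).degree p = G.degree p.1 * H.degree p.2 := by
  have : (dirProd G H).neighborFinset p = G.neighborFinset p.1 ×ˢ H.neighborFinset p.2 := by
    ext q
    simp only [mem_neighborFinset, Finset.mem_product]
    rfl
  rw [← card_neighborFinset_eq_degree, this, Finset.card_product]
  simp

lemma IsTotalDomSet.prod {D : Set V} {E : Set W} (hD : IsTotalDomSet G D)
    (hE : IsTotalDomSet H E) : IsTotalDomSet (dirProd G H) (D ×ˢ E) := fun p => by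
  obtain ⟨u, hu, hpu⟩ := hD p.1
  obtain ⟨w, hw, hpw⟩ := hE p.2
  exact ⟨(u, w), ⟨hu, hw⟩, hpu, hpw⟩

end DirProd

section Cycle

lemma cycleGraph_degree_le_two {n : ℕ} (v : Fin n) : (cycleGraph n).degree v ≤ 2 := by
  match n with
  | 0 => exact v.elim0
  | 1 => simp
  | n + 2 => exact cycleGraph_degree_two_le ▸ Finset.card_le_two

lemma Fin.val_add_mod_of_dvd {n d : ℕ} (h : d ∣ n) (a b : Fin n) :
    (a + b).val % d = (a.val + b.val) % d := by
  rw [Fin.val_add, Nat.mod_mod_of_dvd _ h]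

lemma Fin.val_sub_mod_of_dvd {n d : ℕ} (h : d ∣ n) (a b : Fin n) :
    (a - b).val % d = (n - b.val + a.val) % d := by
  rw [Fin.sub_def, Nat.mod_mod_of_dvd _ h]

def cycleDom (n : ℕ) : Finset (Fin n) := {i | i.val % 4 < 2}

lemma isTotalDomSet_cycleDom {n : ℕ} (hn : 4 ∣ n) :
    IsTotalDomSet (cycleGraph n) (cycleDom n) := by
  match n, hn with
  | 0, _ => exact fun v => v.elim0
  | 1, h | 2, h | 3, h => norm_num at h
  | n + 4, h =>
    intro i
    have h1 : (1 : Fin (n + 4)).val = 1 := rfl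
    have hsucc := Fin.val_add_mod_of_dvd h i 1
    have hpred := Fin.val_sub_mod_of_dvd h i 1
    rw [h1] at hsucc hpred
    by_cases hi : i.val % 4 = 0 ∨ i.val % 4 = 3
    · exact ⟨i + 1, by simp [cycleDom]; omega, by simp [cycleGraph_adj]⟩
    · exact ⟨i - 1, by simp [cycleDom]; omega, by simp [cycleGraph_adj]⟩

/-- Translation by `2` exchanges `cycleDom n` and its complement. -/
lemma two_mul_card_cycleDom {n : ℕ} (hn : 4 ∣ n) : 2 * #(cycleDom n) = n := by
  match n, hn with
  | 0, _ => rfl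
  | 1, h | 2, h | 3, h => norm_num at h
  | n + 4, h =>
    have hshift (i : Fin (n + 4)) : (i + 2).val % 4 = (i.val + 2) % 4 :=
      Fin.val_add_mod_of_dvd h i 2
    have hle : #(cycleDom (n + 4)) ≤ #(cycleDom (n + 4))ᶜ :=
      Finset.card_le_card_of_injOn (· + 2)
        (fun i hi => by simp [cycleDom] at hi ⊢; have := hshift i; omega)
        (add_left_injective 2).injOn
    have hge : #(cycleDom (n + 4))ᶜ ≤ #(cycleDom (n + 4)) :=
      Finset.card_le_card_of_injOn (· + 2)
        (fun i hi => by simp [cycleDom] at hi ⊢; have := hshift i; omega)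
        (add_left_injective 2).injOn
    rw [Finset.card_compl, Fintype.card_fin] at hle hge
    omega

end Cycle

theorem stmt_19_general (m n : ℕ) (hm4 : 4 ∣ m) (hn4 : 4 ∣ n) :
    trdn (dirProd (SimpleGraph.cycleGraph m) (SimpleGraph.cycleGraph n)) = m * n / 2 := by
  classical
  have hdom := (isTotalDomSet_cycleDom hm4).prod (isTotalDomSet_cycleDom hn4)
  rw [← Finset.coe_product] at hdom
  have hdeg (p : Fin m × Fin n) : (dirProd (cycleGraph m) (cycleGraph n)).degree p ≤ 4 := by
    rw [dirProd_degree]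
    exact Nat.mul_le_mul (cycleGraph_degree_le_two p.1) (cycleGraph_degree_le_two p.2)
  have hcard : m * n / 2 = 2 * #(cycleDom m ×ˢ cycleDom n) := by
    have hm := two_mul_card_cycleDom hm4
    have hn := two_mul_card_cycleDom hn4
    rw [Finset.card_product]
    generalize #(cycleDom m) = x at *
    generalize #(cycleDom n) = y at *
    subst hm hn
    rw [show 2 * x * (2 * y) = 2 * (2 * (x * y)) by ring, Nat.mul_div_cancel_left _ two_pos]
  refine le_antisymm (hcard ▸ trdn_le_two_mul_card hdom) ?_
  refine le_trdn ⟨_, hdom.isTRDF⟩ fun f hf => ?_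
  have := hf.two_mul_card_le (by norm_num) hdeg
  rw [Fintype.card_prod, Fintype.card_fin, Fintype.card_fin] at this
  omega

theorem stmt_19 (m n : ℕ) (hm : 0 < m) (hn : 0 < n) (hm4 : 4 ∣ m) (hn4 : 4 ∣ n) :
    trdn (dirProd (SimpleGraph.cycleGraph m) (SimpleGraph.cycleGraph n)) = m * n / 2 :=
  stmt_19_general m n hm4 hn4
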